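/- arXiv:math/0411258 — 3 statements merged into one kernel-verified Lean document; each statement's English description precedes it below -/
import Mathlib

section
/- For every natural number i, the Hirzebruch–Jung continued fraction whose entries are: one entry -(4+2i), then seven entries -2, then one entry -12, then (2+2i) entries -2, equals -(28+18i)²/(9(28+18i) - 1). (This is the uniform continued-fraction identity behind the family of plumbings C₍₂₈₊₁₈ᵢ,₉₎, whose boundaries are the lens spaces L((28+18i)², 9(28+18i)-1).) -/
/-!
Write a continued fraction with entries `≤ -2` as `-p / q` with `0 < q < p`. Prepending the entry `-c`
sends `(p, q)` to `(c p - q, p)`; for `c = 2` this preserves `p - q`, so a block of `n` entries `-2`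
acts by `(p, q) ↦ (p + n (p - q), p + (n - 1) (p - q))`. Running this from the right end of the list
gives `(2i + 3, 2i + 2)`, then `(22i + 34, 2i + 3)`, then `(162i + 251, 142i + 220)`, and finally
`((4 + 2i)(162i + 251) - (142i + 220), 162i + 251) = ((28 + 18i)², 9(28 + 18i) - 1)`.
-/

/-- The Hirzebruch–Jung continued fraction of a list of integers:
`hj [a] = a` and `hj (a :: l) = a - 1 / hj l`. -/
def hj : List ℤ → ℚ
  | [] => 0
  | [a] => (a : ℚ)
  | a :: b :: l => (a : ℚ) - 1 / hj (b :: l)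

lemma hj_neg_cons {l : List ℤ} (hl : l ≠ []) {p q : ℚ} (h : hj l = -p / q) (hp : p ≠ 0)
    (c : ℤ) : hj (-c :: l) = -(c * p - q) / p := by
  obtain ⟨b, l, rfl⟩ := List.exists_cons_of_ne_nil hl
  rw [hj, h]
  push_cast
  field_simp
  ring

lemma hj_replicate_neg_two_append {l : List ℤ} (hl : l ≠ []) {p q : ℚ} (h : hj l = -p / q)
    (hq : 0 < q) (hqp : q < p) (n : ℕ) :
    hj (List.replicate n (-2) ++ l) = -(p + n * (p - q)) / (p + (n - 1) * (p - q)) := by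
  induction n with
  | zero => simpa using h
  | succ n ih =>
    have hpos : p + n * (p - q) ≠ 0 := by
      have : (0 : ℚ) ≤ n * (p - q) := by positivity
      linarith
    rw [List.replicate_succ, List.cons_append, hj_neg_cons (by simp [hl]) ih hpos 2]
    push_cast
    ring

/-- For every natural number `i`, the Hirzebruch–Jung continued fraction with
entries `-(4+2i)`, then seven `-2`'s, then `-12`, then `(2+2i)` entries `-2`,
equals `-(28+18i)²/(9(28+18i)-1)`: the uniform identity behind the family of
plumbings `C₍₂₈₊₁₈ᵢ,₉₎` with boundaries `L((28+18i)², 9(28+18i)-1)`. -/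
theorem hj_C_family (i : ℕ) :
    hj ([-(4 + 2 * (i : ℤ))] ++ List.replicate 7 (-2) ++ [-12] ++
        List.replicate (2 + 2 * i) (-2)) =
      -((28 + 18 * (i : ℚ)) ^ 2) / (9 * (28 + 18 * (i : ℚ)) - 1) := by
  have hi : (0 : ℚ) ≤ i := i.cast_nonneg
  have tail : hj (List.replicate (2 + 2 * i) (-2)) = -(2 * i + 3) / (2 * i + 2) := by
    rw [show 2 + 2 * i = 1 + 2 * i + 1 by omega, List.replicate_succ',
      hj_replicate_neg_two_append (List.cons_ne_nil _ _) (p := 2) (q := 1) (by norm_num [hj])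
        one_pos one_lt_two]
    push_cast
    ring
  have hR : List.replicate (2 + 2 * i) (-2 : ℤ) ≠ [] := by simp
  have twelve : hj (-12 :: List.replicate (2 + 2 * i) (-2)) = -(22 * i + 34) / (2 * i + 3) := by
    rw [hj_neg_cons hR tail (by positivity)]
    push_cast
    ring
  have sevens : hj (List.replicate 7 (-2) ++ -12 :: List.replicate (2 + 2 * i) (-2)) =
      -(162 * i + 251) / (142 * i + 220) := by
    rw [hj_replicate_neg_two_append (List.cons_ne_nil _ _) twelve (by positivity) (by linarith)]
    push_cast
    ring
  have hl : [-(4 + 2 * (i : ℤ))] ++ List.replicate 7 (-2) ++ [-12] ++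
      List.replicate (2 + 2 * i) (-2) =
      -(4 + 2 * (i : ℤ)) :: (List.replicate 7 (-2) ++ -12 :: List.replicate (2 + 2 * i) (-2)) := by
    simp
  rw [hl, hj_neg_cons (by simp) sevens (by positivity)]
  push_cast
  ring
end

section
/- Let 2 ≤ n ≤ 8, let ℤ^{1,n} be ℤ^{n+1} with the bilinear form ⟨x,y⟩ = x₀y₀ - Σᵢ₌₁ⁿ xᵢyᵢ, and let L ∈ ℤ^{1,n} be a characteristic vector with ⟨L,L⟩ = 9 - n. Then there exists an isometry g of the lattice ℤ^{1,n} (a ℤ-linear automorphism preserving the bilinear form) such that g(L) = (3, -1, -1, …, -1). (This is the lattice-theoretic step in the proof that any two minimal symplectic 4-manifolds homeomorphic to ℂP² # n ℂP̄² have identified Seiberg–Witten invariants.) -/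
/-- The intersection form of `ℂP² # n ℂP̄²` on `ℤ^{1,n} = ℤ^{n+1}`:
`⟨x,y⟩ = x₀y₀ - Σᵢ₌₁ⁿ xᵢyᵢ`. -/
def form (n : ℕ) (x y : Fin (n + 1) → ℤ) : ℤ :=
  x 0 * y 0 - ∑ i : Fin n, x i.succ * y i.succ

namespace CharVec

variable {n : ℕ}

lemma form_comm (x y : Fin (n+1) → ℤ) : form n x y = form n y x := by
  unfold form
  rw [mul_comm]
  congr 1
  exact Finset.sum_congr rfl fun i _ => mul_comm _ _

lemma form_add_left (x y z : Fin (n+1) → ℤ) :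
    form n (x + y) z = form n x z + form n y z := by
  unfold form
  simp only [Pi.add_apply, add_mul, Finset.sum_add_distrib]
  ring

lemma form_smul_left (c : ℤ) (x y : Fin (n+1) → ℤ) :
    form n (c • x) y = c * form n x y := by
  unfold form
  simp only [Pi.smul_apply, smul_eq_mul, Finset.mul_sum, mul_assoc, mul_sub]

lemma form_add_right (x y z : Fin (n+1) → ℤ) :
    form n x (y + z) = form n x y + form n x z := by
  rw [form_comm, form_add_left, form_comm y x, form_comm z x]

lemma form_smul_right (c : ℤ) (x y : Fin (n+1) → ℤ) :
    form n x (c • y) = c * form n x y := by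
  rw [form_comm, form_smul_left, form_comm]

def Preserves (n : ℕ) (g : (Fin (n+1) → ℤ) ≃ₗ[ℤ] (Fin (n+1) → ℤ)) : Prop :=
  ∀ x y, form n (g x) (g y) = form n x y

def Good (n : ℕ) (L : Fin (n+1) → ℤ) : Prop :=
  ∃ g : (Fin (n+1) → ℤ) ≃ₗ[ℤ] (Fin (n+1) → ℤ),
    Preserves n g ∧ g L = fun i => if i = 0 then 3 else -1

/-- composing: if `g₀` is an isometry and `g₀ L` is good, so is `L`. -/
lemma good_comp (g₀ : (Fin (n+1) → ℤ) ≃ₗ[ℤ] (Fin (n+1) → ℤ))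
    (hg₀ : Preserves n g₀) {L : Fin (n+1) → ℤ} (h : Good n (g₀ L)) : Good n L := by
  obtain ⟨g, hg, hgl⟩ := h
  exact ⟨g₀.trans g, fun x y => ((hg _ _).trans (hg₀ _ _)), hgl⟩

lemma char_transfer (g₀ : (Fin (n+1) → ℤ) ≃ₗ[ℤ] (Fin (n+1) → ℤ))
    (hg₀ : Preserves n g₀) {L : Fin (n+1) → ℤ}
    (hchar : ∀ v, form n L v ≡ form n v v [ZMOD 2]) :
    ∀ v, form n (g₀ L) v ≡ form n v v [ZMOD 2] := by
  intro v
  have h1 : form n (g₀ L) v = form n L (g₀.symm v) := by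
    conv_lhs => rw [show v = g₀ (g₀.symm v) by simp]
    exact hg₀ _ _
  have h2 : form n (g₀.symm v) (g₀.symm v) = form n v v := by
    conv_rhs => rw [show v = g₀ (g₀.symm v) by simp]
    exact (hg₀ _ _).symm
  rw [h1, ← h2]
  exact hchar _

/-- sign-flip isometry -/
def signEquiv (ε : Fin (n+1) → ℤ) (hε : ∀ i, ε i * ε i = 1) :
    (Fin (n+1) → ℤ) ≃ₗ[ℤ] (Fin (n+1) → ℤ) where
  toFun x := fun i => ε i * x i
  invFun x := fun i => ε i * x i
  map_add' x y := by funext i; simp [mul_add]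
  map_smul' c x := by funext i; simp; ring
  left_inv x := by funext i; simp [← mul_assoc, hε i]
  right_inv x := by funext i; simp [← mul_assoc, hε i]

lemma signEquiv_preserves (ε : Fin (n+1) → ℤ) (hε : ∀ i, ε i * ε i = 1) :
    Preserves n (signEquiv ε hε) := by
  intro x y
  unfold form signEquiv
  simp only [LinearEquiv.coe_mk, Equiv.coe_fn_mk, LinearMap.coe_mk, AddHom.coe_mk]
  have h0 : ε 0 * x 0 * (ε 0 * y 0) = x 0 * y 0 := by
    linear_combination x 0 * y 0 * hε 0
  rw [h0]
  congr 1
  refine Finset.sum_congr rfl fun i _ => ?_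
  linear_combination x i.succ * y i.succ * hε i.succ

/-- reflection isometry: `x ↦ x + k⟨x,v⟩v` when `k⟨v,v⟩ = -2`. -/
def reflEquiv (v : Fin (n+1) → ℤ) (k : ℤ) (hv : k * form n v v = -2) :
    (Fin (n+1) → ℤ) ≃ₗ[ℤ] (Fin (n+1) → ℤ) where
  toFun x := x + (k * form n x v) • v
  invFun x := x + (k * form n x v) • v
  map_add' x y := by
    show x + y + (k * form n (x + y) v) • v =
      (x + (k * form n x v) • v) + (y + (k * form n y v) • v)
    rw [form_add_left, mul_add, add_smul]; abel
  map_smul' c x := by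
    show c • x + (k * form n (c • x) v) • v = c • (x + (k * form n x v) • v)
    rw [form_smul_left, smul_add, smul_smul, mul_left_comm]
  left_inv x := by
    show x + (k * form n x v) • v + (k * form n (x + (k * form n x v) • v) v) • v = x
    have key : form n (x + (k * form n x v) • v) v = - form n x v := by
      rw [form_add_left, form_smul_left]
      linear_combination (form n x v) * hv
    rw [key, show k * -form n x v = -(k * form n x v) by ring, neg_smul]
    abel
  right_inv x := by
    show x + (k * form n x v) • v + (k * form n (x + (k * form n x v) • v) v) • v = x
    have key : form n (x + (k * form n x v) • v) v = - form n x v := by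
      rw [form_add_left, form_smul_left]
      linear_combination (form n x v) * hv
    rw [key, show k * -form n x v = -(k * form n x v) by ring, neg_smul]
    abel

lemma reflEquiv_apply (v : Fin (n+1) → ℤ) (k : ℤ) (hv : k * form n v v = -2)
    (x : Fin (n+1) → ℤ) : reflEquiv v k hv x = x + (k * form n x v) • v := rfl

lemma reflEquiv_preserves (v : Fin (n+1) → ℤ) (k : ℤ) (hv : k * form n v v = -2) :
    Preserves n (reflEquiv v k hv) := by
  intro x y
  rw [reflEquiv_apply, reflEquiv_apply, form_add_left, form_add_right, form_add_right,
    form_smul_left, form_smul_right, form_smul_right, form_smul_left]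
  have h2 : form n v y = form n y v := form_comm v y
  linear_combination (k * form n x v) * h2 + (k * form n x v * form n y v) * hv

end CharVec
namespace CharVec

variable {n : ℕ}

lemma sum_mul_single (f : Fin n → ℤ) (j : Fin n) (c : ℤ) :
    ∑ i : Fin n, f i * (Pi.single j c : Fin n → ℤ) i = f j * c := by
  simp only [Pi.single_apply, mul_ite, mul_zero]
  rw [Finset.sum_ite_eq']
  simp

lemma form_cons (x : Fin (n+1) → ℤ) (c : ℤ) (w : Fin n → ℤ) :
    form n x (Fin.cons c w) = x 0 * c - ∑ j : Fin n, x j.succ * w j := by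
  simp [form, Fin.cons_succ, Fin.cons_zero]

lemma odd0 (L : Fin (n+1) → ℤ) (hchar : ∀ v, form n L v ≡ form n v v [ZMOD 2]) :
    L 0 % 2 = 1 := by
  have h := hchar (Fin.cons 1 0)
  have e1 : form n L (Fin.cons 1 0) = L 0 := by
    rw [form_cons]; simp
  have e2 : form n (Fin.cons 1 0) (Fin.cons 1 0) = 1 := by
    rw [form_cons]; simp [Fin.cons_zero, Fin.cons_succ]
  rw [e1, e2] at h
  have h' : L 0 % 2 = 1 % 2 := h
  omega

lemma odd_succ (L : Fin (n+1) → ℤ) (hchar : ∀ v, form n L v ≡ form n v v [ZMOD 2])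
    (j : Fin n) : L j.succ % 2 = 1 := by
  have h := hchar (Fin.cons 0 (Pi.single j 1))
  have e1 : form n L (Fin.cons 0 (Pi.single j 1)) = -(L j.succ) := by
    rw [form_cons]; simp [Fin.cons_succ, sum_mul_single]
  have e2 : form n (Fin.cons 0 (Pi.single j 1)) (Fin.cons 0 (Pi.single j 1)) = -1 := by
    rw [form_cons]
    simp only [Fin.cons_zero, Fin.cons_succ, zero_mul, zero_sub, neg_inj]
    have := sum_mul_single (fun i => (Pi.single j (1:ℤ) : Fin n → ℤ) i) j 1
    simpa using this
  rw [e1, e2] at h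
  have h' : (-(L j.succ)) % 2 = (-1) % 2 := h
  omega

lemma sq_sum (L : Fin (n+1) → ℤ) (hsq : form n L L = 9 - n) :
    ∑ j : Fin n, (L j.succ)^2 = (L 0)^2 - 9 + n := by
  unfold form at hsq
  have : ∑ j : Fin n, (L j.succ)^2 = ∑ j : Fin n, L j.succ * L j.succ := by
    refine Finset.sum_congr rfl fun j _ => sq (L j.succ) ▸ by ring
  rw [this]
  nlinarith [hsq]

end CharVec
namespace CharVec

variable {n : ℕ}

lemma one_le_sq {b : ℤ} (hb : b % 2 = 1) : 1 ≤ b ^ 2 := by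
  have : b ≠ 0 := by omega
  have := Int.one_le_abs this
  nlinarith [sq_abs b]

lemma sum_sq_lower (L : Fin (n+1) → ℤ)
    (hodd : ∀ j : Fin n, L j.succ % 2 = 1) (s : Finset (Fin n)) :
    (s.card : ℤ) ≤ ∑ j ∈ s, (L j.succ) ^ 2 := by
  have h := Finset.card_nsmul_le_sum s (fun j => (L j.succ)^2) 1
    (fun j _ => one_le_sq (hodd j))
  simpa using h

/-- The three-index Cremona vector. -/
lemma w_eval (i₁ i₂ i₃ : Fin n) (s₁ s₂ s₃ : ℤ) (x : Fin n → ℤ) :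
    ∑ j : Fin n, x j * ((Pi.single i₁ s₁ + Pi.single i₂ s₂ + Pi.single i₃ s₃ : Fin n → ℤ)) j = x i₁ * s₁ + x i₂ * s₂ + x i₃ * s₃ := by
  have : ∀ j : Fin n, x j * ((Pi.single i₁ s₁ + Pi.single i₂ s₂ + Pi.single i₃ s₃ : Fin n → ℤ)) j
      = x j * (Pi.single i₁ s₁ : Fin n → ℤ) j + x j * (Pi.single i₂ s₂ : Fin n → ℤ) j
        + x j * (Pi.single i₃ s₃ : Fin n → ℤ) j := by
    intro j; simp [Pi.add_apply, mul_add]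
  rw [Finset.sum_congr rfl fun j _ => this j]
  rw [Finset.sum_add_distrib, Finset.sum_add_distrib,
    sum_mul_single, sum_mul_single, sum_mul_single]

/-- The two-index reflection vector. -/
lemma w2_eval (i₁ i₂ : Fin n) (s₁ s₂ : ℤ) (x : Fin n → ℤ) :
    ∑ j : Fin n, x j * ((Pi.single i₁ s₁ + Pi.single i₂ s₂ : Fin n → ℤ)) j
      = x i₁ * s₁ + x i₂ * s₂ := by
  have : ∀ j : Fin n, x j * ((Pi.single i₁ s₁ + Pi.single i₂ s₂ : Fin n → ℤ)) j
      = x j * (Pi.single i₁ s₁ : Fin n → ℤ) j + x j * (Pi.single i₂ s₂ : Fin n → ℤ) j := by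
    intro j; simp [Pi.add_apply, mul_add]
  rw [Finset.sum_congr rfl fun j _ => this j]
  rw [Finset.sum_add_distrib, sum_mul_single, sum_mul_single]

lemma exists_sign (b : ℤ) : ∃ s : ℤ, s * s = 1 ∧ b * s = |b| := by
  rcases le_or_gt 0 b with h | h
  · exact ⟨1, by norm_num, by rw [abs_of_nonneg h]; ring⟩
  · exact ⟨-1, by norm_num, by rw [abs_of_neg h]; ring⟩

end CharVec
namespace CharVec

variable {n : ℕ}

set_option maxHeartbeats 800000 in
lemma posCase (hn2 : 2 ≤ n) (hn8 : n ≤ 8) (m : ℕ)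
    (IH : ∀ L : Fin (n+1) → ℤ, (∀ v, form n L v ≡ form n v v [ZMOD 2]) →
      form n L L = 9 - (n:ℤ) → (L 0).natAbs ≤ m → Good n L) :
    ∀ L : Fin (n+1) → ℤ, (∀ v, form n L v ≡ form n v v [ZMOD 2]) →
      form n L L = 9 - (n:ℤ) → 0 < L 0 → (L 0).natAbs ≤ m + 1 → Good n L := by
  intro L hchar hsq hpos hm
  have ha := odd0 L hchar
  have hb := odd_succ L hchar
  have hss := sq_sum L hsq
  have hsq1 : ∀ j : Fin n, 1 ≤ (L j.succ)^2 := fun j => one_le_sq (hb j)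
  have hsumn : (n:ℤ) ≤ ∑ j : Fin n, (L j.succ)^2 := by
    have h := sum_sq_lower L hb Finset.univ
    simpa using h
  have ha1 : L 0 ≠ 1 := by
    intro h
    rw [h] at hss
    norm_num at hss
    omega
  have hcase : L 0 = 3 ∨ 5 ≤ L 0 := by omega
  rcases hcase with h3 | h5
  · -- base case a = 3
    have hsn : ∑ j : Fin n, (L j.succ)^2 = (n:ℤ) := by
      rw [h3] at hss; norm_num at hss; exact hss
    have hall : ∀ j : Fin n, (L j.succ)^2 = 1 := by
      have hzero : ∑ j : Fin n, ((L j.succ)^2 - 1) = 0 := by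
        rw [Finset.sum_sub_distrib, hsn]
        simp
      intro j
      have h := (Finset.sum_eq_zero_iff_of_nonneg
        (fun j _ => by have := hsq1 j; omega)).mp hzero j (Finset.mem_univ j)
      omega
    refine ⟨signEquiv (Fin.cons 1 (fun j => -(L j.succ)))
      (by intro i
          refine Fin.cases ?_ ?_ i
          · simp
          · intro j
            simp only [Fin.cons_succ]
            linear_combination hall j),
      signEquiv_preserves _ _, ?_⟩
    funext i
    show (Fin.cons 1 (fun j => -(L j.succ)) : Fin (n+1) → ℤ) i * L i = _
    refine Fin.cases ?_ ?_ i
    · simp [h3]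
    · intro j
      simp only [Fin.cons_succ]
      rw [if_neg (Fin.succ_ne_zero j)]
      linear_combination - hall j
  · -- descent case a ≥ 5
    by_cases hn3 : 3 ≤ n
    · -- choose the three indices with largest |L j.succ|
      have hne1 : (Finset.univ : Finset (Fin n)).Nonempty := ⟨⟨0, by omega⟩, Finset.mem_univ _⟩
      obtain ⟨i₁, -, hmax1⟩ := Finset.exists_max_image Finset.univ (fun j => |L j.succ|) hne1
      have hcard1 : (Finset.univ.erase i₁).card = n - 1 := by
        rw [Finset.card_erase_of_mem (Finset.mem_univ i₁), Finset.card_univ, Fintype.card_fin]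
      have hne2 : (Finset.univ.erase i₁).Nonempty := Finset.card_pos.mp (by rw [hcard1]; omega)
      obtain ⟨i₂, hi₂, hmax2⟩ := Finset.exists_max_image _ (fun j => |L j.succ|) hne2
      have hcard2 : ((Finset.univ.erase i₁).erase i₂).card = n - 2 := by
        rw [Finset.card_erase_of_mem hi₂, hcard1]
        omega
      have hne3 : ((Finset.univ.erase i₁).erase i₂).Nonempty :=
        Finset.card_pos.mp (by rw [hcard2]; omega)
      obtain ⟨i₃, hi₃, hmax3⟩ := Finset.exists_max_image _ (fun j => |L j.succ|) hne3
      have h21 : i₂ ≠ i₁ := (Finset.mem_erase.mp hi₂).1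
      have h32 : i₃ ≠ i₂ := (Finset.mem_erase.mp hi₃).1
      have h31 : i₃ ≠ i₁ := (Finset.mem_erase.mp (Finset.mem_erase.mp hi₃).2).1
      have hqp : |L i₂.succ| ≤ |L i₁.succ| := hmax1 i₂ (Finset.mem_univ _)
      have hrq : |L i₃.succ| ≤ |L i₂.succ| := hmax2 i₃ (Finset.mem_erase.mp hi₃).2
      have hr1 : 1 ≤ |L i₃.succ| := Int.one_le_abs (by have := hb i₃; omega)
      -- sum decompositions
      have hd1 : (L i₁.succ)^2 + ∑ x ∈ Finset.univ.erase i₁, (L x.succ)^2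
          = ∑ x : Fin n, (L x.succ)^2 :=
        Finset.add_sum_erase Finset.univ (fun j => (L j.succ)^2) (Finset.mem_univ i₁)
      have hd2 : (L i₂.succ)^2 + ∑ x ∈ (Finset.univ.erase i₁).erase i₂, (L x.succ)^2
          = ∑ x ∈ Finset.univ.erase i₁, (L x.succ)^2 :=
        Finset.add_sum_erase _ (fun j => (L j.succ)^2) hi₂
      have hd3 : (L i₃.succ)^2 + ∑ x ∈ ((Finset.univ.erase i₁).erase i₂).erase i₃, (L x.succ)^2
          = ∑ x ∈ (Finset.univ.erase i₁).erase i₂, (L x.succ)^2 :=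
        Finset.add_sum_erase _ (fun j => (L j.succ)^2) hi₃
      -- tail bound
      have hcard3 : (((Finset.univ.erase i₁).erase i₂).erase i₃).card = n - 3 := by
        rw [Finset.card_erase_of_mem hi₃, hcard2]
        omega
      have htail : ∑ j ∈ ((Finset.univ.erase i₁).erase i₂).erase i₃, (L j.succ)^2 ≤
          ((n:ℤ) - 3) * |L i₃.succ|^2 := by
        have hbd : ∀ j ∈ ((Finset.univ.erase i₁).erase i₂).erase i₃,
            (L j.succ)^2 ≤ |L i₃.succ|^2 := by
          intro j hj
          have h1 : |L j.succ| ≤ |L i₃.succ| := hmax3 j (Finset.erase_subset _ _ hj)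
          calc (L j.succ)^2 = |L j.succ|^2 := (sq_abs _).symm
            _ ≤ |L i₃.succ|^2 := pow_le_pow_left₀ (abs_nonneg _) h1 2
        have h := Finset.sum_le_card_nsmul _ _ _ hbd
        rw [hcard3] at h
        have hc : (((n - 3 : ℕ)) : ℤ) = (n:ℤ) - 3 := by
          rw [Nat.cast_sub hn3]; norm_num
        rw [nsmul_eq_mul, hc] at h
        exact h
      -- bound on largest
      have hplow : (n:ℤ) - 1 ≤ ∑ j ∈ Finset.univ.erase i₁, (L j.succ)^2 := by
        have h := sum_sq_lower L hb (Finset.univ.erase i₁)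
        rw [hcard1] at h
        have hc1 : (((n - 1 : ℕ)) : ℤ) = (n:ℤ) - 1 := by
          rw [Nat.cast_sub (by omega)]; norm_num
        rw [hc1] at h
        exact h
      have hpbound : (L i₁.succ)^2 ≤ (L 0)^2 - 8 := by
        linarith only [hd1, hplow, hss]
      have hpa : |L i₁.succ| ≤ L 0 - 1 := by
        by_contra hcc
        push_neg at hcc
        have hsq2 : (L 0)^2 ≤ |L i₁.succ|^2 :=
          pow_le_pow_left₀ (by linarith only [h5]) (by linarith only [hcc]) 2
        rw [sq_abs] at hsq2
        linarith only [hsq2, hpbound]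
      have hqa : |L i₂.succ| ≤ L 0 - 1 := le_trans hqp hpa
      have hra : |L i₃.succ| ≤ L 0 - 1 := le_trans hrq hqa
      -- the key Noether-type inequality
      have hkey : L 0 < |L i₁.succ| + |L i₂.succ| + |L i₃.succ| := by
        by_contra hcon
        push_neg at hcon
        have hsum3 : (L i₁.succ)^2 + (L i₂.succ)^2 + (L i₃.succ)^2 +
            ∑ j ∈ ((Finset.univ.erase i₁).erase i₂).erase i₃, (L j.succ)^2
            = (L 0)^2 - 9 + n := by
          rw [← hss, ← hd1, ← hd2, ← hd3]; ring
        have e1 : |L i₁.succ|^2 = (L i₁.succ)^2 := sq_abs _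
        have e2 : |L i₂.succ|^2 = (L i₂.succ)^2 := sq_abs _
        have e3 : |L i₃.succ|^2 = (L i₃.succ)^2 := sq_abs _
        have hfac1 : 0 ≤ (|L i₁.succ| - |L i₃.succ|) * (|L i₂.succ| - |L i₃.succ|) :=
          mul_nonneg (by linarith only [hqp, hrq]) (by linarith only [hrq])
        have h3r : 3 * |L i₃.succ| ≤ L 0 := by linarith only [hcon, hqp, hrq]
        have hfac2 : 0 ≤ (L 0 - |L i₁.succ| - |L i₂.succ| - |L i₃.succ|) *
            (L 0 + |L i₁.succ| + |L i₂.succ| - 3 * |L i₃.succ|) :=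
          mul_nonneg (by linarith only [hcon]) (by linarith only [hqp, hrq, hra])
        have hx1 : |L i₁.succ|^2 + |L i₂.succ|^2 ≤
            (|L i₁.succ| + |L i₂.succ| - |L i₃.succ|)^2 + |L i₃.succ|^2 := by
          linarith only [hfac1]
        have hx2 : (|L i₁.succ| + |L i₂.succ| - |L i₃.succ|)^2 ≤ (L 0 - 2 * |L i₃.succ|)^2 := by
          linarith only [hfac2]
        have hstar : 4 * (L 0) * |L i₃.succ| ≤ 9 - (n:ℤ) + ((n:ℤ) + 3) * |L i₃.succ|^2 := by
          linarith only [hsum3, htail, hx1, hx2, e1, e2, e3]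
        rcases eq_or_lt_of_le hr1 with hr | hr
        · rw [← hr] at hstar
          norm_num at hstar
          linarith only [hstar, h5]
        · have hr2 : 2 ≤ |L i₃.succ| := hr
          have h12r : 12 * |L i₃.succ|^2 ≤ 4 * (L 0) * |L i₃.succ| := by
            have hmm := mul_nonneg (by linarith only [h3r] : (0:ℤ) ≤ L 0 - 3 * |L i₃.succ|)
              (by linarith only [hr1] : (0:ℤ) ≤ |L i₃.succ|)
            linarith only [hmm]
          have hfin : (9 - (n:ℤ)) * (|L i₃.succ|^2 - 1) ≤ 0 := by
            linarith only [hstar, h12r]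
          have h9 : 0 < 9 - (n:ℤ) := by
            have : (n:ℤ) ≤ 8 := by exact_mod_cast hn8
            linarith
          have hrr : 0 < |L i₃.succ|^2 - 1 := by
            have h4 : (2:ℤ)^2 ≤ |L i₃.succ|^2 := pow_le_pow_left₀ (by norm_num) hr2 2
            norm_num at h4
            linarith only [h4, sq_abs (L i₃.succ)]
          exact absurd hfin (not_le.mpr (mul_pos h9 hrr))
      -- build the reflection vector
      obtain ⟨s1, hs1sq, hbs1⟩ := exists_sign (L i₁.succ)
      obtain ⟨s2, hs2sq, hbs2⟩ := exists_sign (L i₂.succ)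
      obtain ⟨s3, hs3sq, hbs3⟩ := exists_sign (L i₃.succ)
      set w : Fin n → ℤ := Pi.single i₁ s1 + Pi.single i₂ s2 + Pi.single i₃ s3 with hw
      set v : Fin (n+1) → ℤ := Fin.cons 1 w with hv
      have hv0 : v 0 = 1 := by rw [hv]; exact Fin.cons_zero _ _
      have hw1 : w i₁ = s1 := by
        rw [hw]; simp [Pi.single_apply, Ne.symm h21, Ne.symm h31]
      have hw2 : w i₂ = s2 := by
        rw [hw]; simp [Pi.single_apply, h21, Ne.symm h32]
      have hw3 : w i₃ = s3 := by
        rw [hw]; simp [Pi.single_apply, h31, h32]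
      have hwsum : ∀ x : Fin n → ℤ, ∑ j : Fin n, x j * w j
          = x i₁ * s1 + x i₂ * s2 + x i₃ * s3 := by
        intro x; rw [hw]; exact w_eval i₁ i₂ i₃ s1 s2 s3 x
      have hvv : form n v v = -2 := by
        rw [hv, form_cons]
        simp only [Fin.cons_zero, Fin.cons_succ]
        rw [hwsum w, hw1, hw2, hw3, hs1sq, hs2sq, hs3sq]
        ring
      have hk : (1:ℤ) * form n v v = -2 := by rw [hvv]; ring
      have hpres := reflEquiv_preserves v 1 hk
      have hLv : form n L v = L 0 - (|L i₁.succ| + |L i₂.succ| + |L i₃.succ|) := by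
        rw [hv, form_cons]
        rw [hwsum (fun j => L j.succ), hbs1, hbs2, hbs3]
        ring
      have hL'0 : (reflEquiv v 1 hk) L 0 = L 0 + form n L v := by
        rw [reflEquiv_apply]
        simp [hv0]
      have hsmall : ((reflEquiv v 1 hk) L 0).natAbs ≤ m := by
        rw [hL'0, hLv]
        omega
      exact good_comp _ hpres (IH _ (char_transfer _ hpres hchar)
        (by rw [hpres L L]; exact hsq) hsmall)
    · -- n = 2 case
      have hnz : (n:ℤ) = 2 := by
        have : n = 2 := by omega
        exact_mod_cast this
      obtain ⟨i₁, i₂, h21⟩ : ∃ i₁ i₂ : Fin n, i₂ ≠ i₁ :=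
        ⟨⟨0, by omega⟩, ⟨1, by omega⟩, Fin.ne_of_val_ne (by norm_num)⟩
      have hi₂mem : i₂ ∈ Finset.univ.erase i₁ := Finset.mem_erase.mpr ⟨h21, Finset.mem_univ _⟩
      have hd1 : (L i₁.succ)^2 + ∑ x ∈ Finset.univ.erase i₁, (L x.succ)^2
          = ∑ x : Fin n, (L x.succ)^2 :=
        Finset.add_sum_erase Finset.univ (fun j => (L j.succ)^2) (Finset.mem_univ i₁)
      have hd2 : (L i₂.succ)^2 + ∑ x ∈ (Finset.univ.erase i₁).erase i₂, (L x.succ)^2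
          = ∑ x ∈ Finset.univ.erase i₁, (L x.succ)^2 :=
        Finset.add_sum_erase _ (fun j => (L j.succ)^2) hi₂mem
      have hcard2 : ((Finset.univ.erase i₁).erase i₂).card = 0 := by
        rw [Finset.card_erase_of_mem hi₂mem, Finset.card_erase_of_mem (Finset.mem_univ _),
          Finset.card_univ, Fintype.card_fin]
        omega
      have hempty : ∑ x ∈ (Finset.univ.erase i₁).erase i₂, (L x.succ)^2 = 0 := by
        rw [Finset.card_eq_zero.mp hcard2]
        simp
      have hsum2 : (L i₁.succ)^2 + (L i₂.succ)^2 = (L 0)^2 - 9 + (n:ℤ) := by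
        linarith only [hd1, hd2, hempty, hss]
      have hp1 : 1 ≤ |L i₁.succ| := Int.one_le_abs (by have := hb i₁; omega)
      have hq1 : 1 ≤ |L i₂.succ| := Int.one_le_abs (by have := hb i₂; omega)
      have e1 : |L i₁.succ|^2 = (L i₁.succ)^2 := sq_abs _
      have e2 : |L i₂.succ|^2 = (L i₂.succ)^2 := sq_abs _
      have hpbound : (L i₁.succ)^2 ≤ (L 0)^2 - 8 := by
        linarith only [hsum2, hsq1 i₂, hnz]
      have hqbound : (L i₂.succ)^2 ≤ (L 0)^2 - 8 := by
        linarith only [hsum2, hsq1 i₁, hnz]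
      have hpa : |L i₁.succ| ≤ L 0 - 1 := by
        by_contra hcc
        push_neg at hcc
        have hsq2 : (L 0)^2 ≤ |L i₁.succ|^2 :=
          pow_le_pow_left₀ (by linarith only [h5]) (by linarith only [hcc]) 2
        rw [sq_abs] at hsq2
        linarith only [hsq2, hpbound]
      have hqa : |L i₂.succ| ≤ L 0 - 1 := by
        by_contra hcc
        push_neg at hcc
        have hsq2 : (L 0)^2 ≤ |L i₂.succ|^2 :=
          pow_le_pow_left₀ (by linarith only [h5]) (by linarith only [hcc]) 2
        rw [sq_abs] at hsq2
        linarith only [hsq2, hqbound]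
      have hkey : L 0 < |L i₁.succ| + |L i₂.succ| := by
        by_contra hcon
        push_neg at hcon
        have hfac1 : 0 ≤ (|L i₁.succ| - 1) * (|L i₂.succ| - 1) :=
          mul_nonneg (by linarith only [hp1]) (by linarith only [hq1])
        have hfac2 : 0 ≤ (L 0 - |L i₁.succ| - |L i₂.succ|) *
            (L 0 + |L i₁.succ| + |L i₂.succ| - 2) :=
          mul_nonneg (by linarith only [hcon]) (by linarith only [hp1, hq1, h5])
        have hx1 : |L i₁.succ|^2 + |L i₂.succ|^2 ≤
            (|L i₁.succ| + |L i₂.succ| - 1)^2 + 1 := by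
          linarith only [hfac1]
        have hx2 : (|L i₁.succ| + |L i₂.succ| - 1)^2 ≤ (L 0 - 1)^2 := by
          linarith only [hfac2]
        linarith only [hsum2, hx1, hx2, e1, e2, hnz, h5]
      obtain ⟨s1, hs1sq, hbs1⟩ := exists_sign (L i₁.succ)
      obtain ⟨s2, hs2sq, hbs2⟩ := exists_sign (L i₂.succ)
      set w : Fin n → ℤ := Pi.single i₁ s1 + Pi.single i₂ s2 with hw
      set v : Fin (n+1) → ℤ := Fin.cons 1 w with hv
      have hv0 : v 0 = 1 := by rw [hv]; exact Fin.cons_zero _ _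
      have hw1 : w i₁ = s1 := by
        rw [hw]; simp [Pi.single_apply, Ne.symm h21]
      have hw2 : w i₂ = s2 := by
        rw [hw]; simp [Pi.single_apply, h21]
      have hwsum : ∀ x : Fin n → ℤ, ∑ j : Fin n, x j * w j = x i₁ * s1 + x i₂ * s2 := by
        intro x; rw [hw]; exact w2_eval i₁ i₂ s1 s2 x
      have hvv : form n v v = -1 := by
        rw [hv, form_cons]
        simp only [Fin.cons_zero, Fin.cons_succ]
        rw [hwsum w, hw1, hw2, hs1sq, hs2sq]
        ring
      have hk : (2:ℤ) * form n v v = -2 := by rw [hvv]; ring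
      have hpres := reflEquiv_preserves v 2 hk
      have hLv : form n L v = L 0 - (|L i₁.succ| + |L i₂.succ|) := by
        rw [hv, form_cons]
        rw [hwsum (fun j => L j.succ), hbs1, hbs2]
        ring
      have hL'0 : (reflEquiv v 2 hk) L 0 = L 0 + 2 * form n L v := by
        rw [reflEquiv_apply]
        simp [hv0]
      have hsmall : ((reflEquiv v 2 hk) L 0).natAbs ≤ m := by
        rw [hL'0, hLv]
        omega
      exact good_comp _ hpres (IH _ (char_transfer _ hpres hchar)
        (by rw [hpres L L]; exact hsq) hsmall)

end CharVec
namespace CharVec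

variable {n : ℕ}

lemma main (hn2 : 2 ≤ n) (hn8 : n ≤ 8) :
    ∀ m : ℕ, ∀ L : Fin (n+1) → ℤ, (∀ v, form n L v ≡ form n v v [ZMOD 2]) →
      form n L L = 9 - (n:ℤ) → (L 0).natAbs ≤ m → Good n L := by
  intro m
  induction m with
  | zero =>
    intro L hchar hsq hm
    have := odd0 L hchar
    omega
  | succ m IHm =>
    intro L hchar hsq hm
    rcases lt_trichotomy (L 0) 0 with hneg | hzero | hposs
    · have hε : ∀ i : Fin (n+1), (Fin.cons (-1) 1 : Fin (n+1) → ℤ) i *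
          (Fin.cons (-1) 1 : Fin (n+1) → ℤ) i = 1 := by
        intro i
        refine Fin.cases ?_ ?_ i <;> simp
      have hpres := signEquiv_preserves (Fin.cons (-1) 1) hε
      have h0 : (signEquiv (Fin.cons (-1) 1) hε) L 0 = -(L 0) := by
        show (Fin.cons (-1) 1 : Fin (n+1) → ℤ) 0 * L 0 = -(L 0)
        simp
      apply good_comp _ hpres
      apply posCase hn2 hn8 m IHm _ (char_transfer _ hpres hchar)
        (by rw [hpres L L]; exact hsq) (by rw [h0]; omega) (by rw [h0]; omega)
    · exfalso
      have := odd0 L hchar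
      omega
    · exact posCase hn2 hn8 m IHm L hchar hsq hposs hm

end CharVec

/-- For `2 ≤ n ≤ 8`, every characteristic vector `L` of `ℤ^{1,n}` with
`⟨L,L⟩ = 9 - n` can be mapped to `(3, -1, …, -1)` by an isometry of the
lattice: the lattice-theoretic step in identifying the Seiberg–Witten
invariants of minimal symplectic 4-manifolds homeomorphic to `ℂP² # n ℂP̄²`. -/
theorem characteristic_vector_isometry (n : ℕ) (hn2 : 2 ≤ n) (hn8 : n ≤ 8)
    (L : Fin (n + 1) → ℤ)
    (hchar : ∀ v : Fin (n + 1) → ℤ, form n L v ≡ form n v v [ZMOD 2])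
    (hsq : form n L L = 9 - n) :
    ∃ g : (Fin (n + 1) → ℤ) ≃ₗ[ℤ] (Fin (n + 1) → ℤ),
      (∀ x y, form n (g x) (g y) = form n x y) ∧
      g L = fun i => if i = 0 then 3 else -1 := by
  obtain ⟨g, hg, hgl⟩ := CharVec.main hn2 hn8 ((L 0).natAbs) L hchar hsq le_rfl
  exact ⟨g, hg, hgl⟩
end

section
/- For t ∈ ℂ let p_t(x,y) = t(x - 1) + x³ + x² - y². Then the set of t ∈ ℂ for which there exists (x,y) ∈ ℂ² with p_t(x,y) = 0, t + 3x² + 2x = 0 and -2y = 0 (i.e. for which the affine curve {p_t = 0} has a singular point) is exactly {0, -(11 + 5√5)/2, -(11 - 5√5)/2}. In other words, besides the curve C₁ (the fiber over [1:0]), the pencil generated by C₁ and C₂ contains exactly three singular members C₂, C₃, C₄, occurring at the parameter values t = 0 and t = -(11 ± 5√5)/2. -/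
/-!
A singular point has `y = 0` and `t = -(3x² + 2x)`; substituting this into `p_t` leaves
`-2x(x² - x - 1) = 0`, so `x ∈ {0, (1 ± √5)/2}`, and these `x` give `t = 0, -(11 ± 5√5)/2`.
-/

section Field

variable {K : Type*} [Field K] [NeZero (2 : K)]

theorem exists_singular_point_iff (t : K) :
    (∃ x y : K, t * (x - 1) + x ^ 3 + x ^ 2 - y ^ 2 = 0 ∧ t + 3 * x ^ 2 + 2 * x = 0 ∧
        -(2 * y) = 0) ↔
      ∃ x : K, x * (x ^ 2 - x - 1) = 0 ∧ t = -(3 * x ^ 2 + 2 * x) := by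
  constructor
  · rintro ⟨x, y, hp, hpx, hpy⟩
    have hy : y = 0 := by simpa [two_ne_zero] using hpy
    subst hy
    have hcubic : 2 * (x * (x ^ 2 - x - 1)) = 0 := by
      linear_combination -hp + (x - 1) * hpx
    exact ⟨x, (mul_eq_zero.mp hcubic).resolve_left two_ne_zero, by linear_combination hpx⟩
  · rintro ⟨x, hx, rfl⟩
    exact ⟨x, 0, by linear_combination (-2 : K) * hx, by ring, by ring⟩

theorem sq_sub_self_sub_one_eq_zero_iff {s : K} (hs : s ^ 2 = 5) (x : K) :
    x ^ 2 - x - 1 = 0 ↔ x = (1 + s) / 2 ∨ x = (1 - s) / 2 := by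
  have hfactor : x ^ 2 - x - 1 = (x - (1 + s) / 2) * (x - (1 - s) / 2) := by
    field_simp
    linear_combination hs
  rw [hfactor, mul_eq_zero, sub_eq_zero, sub_eq_zero]

end Field

/-- The parameter values `t` for which the affine cubic
`p_t(x,y) = t(x-1) + x³ + x² - y²` has a singular point are exactly
`t = 0` and `t = -(11 ± 5√5)/2`: besides `C₁`, the pencil generated by `C₁`
and `C₂` contains exactly the three singular members `C₂, C₃, C₄`. -/
theorem singular_members_of_pencil :
    {t : ℂ | ∃ x y : ℂ,
        t * (x - 1) + x ^ 3 + x ^ 2 - y ^ 2 = 0 ∧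
        t + 3 * x ^ 2 + 2 * x = 0 ∧
        -(2 * y) = 0} =
      {0, (↑(-(11 + 5 * Real.sqrt 5) / 2) : ℂ),
        (↑(-(11 - 5 * Real.sqrt 5) / 2) : ℂ)} := by
  have hs : ((√5 : ℝ) : ℂ) ^ 2 = 5 := by
    rw [← Complex.ofReal_pow, Real.sq_sqrt (by norm_num)]
    norm_num
  have hzero : -(3 * 0 ^ 2 + 2 * 0 : ℂ) = 0 := by ring
  have hplus : -(3 * ((1 + √5) / 2) ^ 2 + 2 * ((1 + √5) / 2) : ℂ) = -(11 + 5 * √5) / 2 := by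
    linear_combination (-3 / 4 : ℂ) * hs
  have hminus : -(3 * ((1 - √5) / 2) ^ 2 + 2 * ((1 - √5) / 2) : ℂ) = -(11 - 5 * √5) / 2 := by
    linear_combination (-3 / 4 : ℂ) * hs
  ext t
  push_cast
  simp only [Set.mem_ofPred_eq, exists_singular_point_iff, mul_eq_zero,
    sq_sub_self_sub_one_eq_zero_iff hs, or_and_right, exists_or, exists_eq_left,
    Set.mem_insert_iff, Set.mem_singleton_iff, hzero, hplus, hminus]
end
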